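/- arXiv:1912.06278 — 3 statements merged into one kernel-verified Lean document; each statement's English description precedes it below -/
import Mathlib

section
/- Let n ≤ 4 and let B = [b_1,…,b_n] be an SR-CVP reduced basis of a full-rank lattice Λ(B) in ℝ^n. Then Σ_{i=1}^n ‖b_i‖² ≤ (4n/(5−n)) · λ_n(B)². -/
open Finset

noncomputable section

/-- `ℝ^n` with the Euclidean norm. -/
abbrev Euc (n : ℕ) := EuclideanSpace ℝ (Fin n)

/-- The lattice generated by the columns `B 1, …, B n`. -/
def lattice {n : ℕ} (B : Fin n → Euc n) : Set (Euc n) :=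
  {v | ∃ c : Fin n → ℤ, v = ∑ i, (c i : ℝ) • B i}

/-- The sublattice generated by all the columns of `B` except the `i`-th one. -/
def subLattice {n : ℕ} (B : Fin n → Euc n) (i : Fin n) : Set (Euc n) :=
  {v | ∃ c : Fin n → ℤ, c i = 0 ∧ v = ∑ j, (c j : ℝ) • B j}

/-- The `k`-th successive minimum `λ_k(B)` of the lattice generated by `B`. -/
def succMin {n : ℕ} (B : Fin n → Euc n) (k : ℕ) : ℝ :=
  sInf {r : ℝ | ∃ v : Fin k → Euc n, (∀ j, v j ∈ lattice B) ∧
    LinearIndependent ℝ v ∧ ∀ j, ‖v j‖ ≤ r}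

/-- `B` is SR-CVP reduced if no vector of the sublattice generated by the other basis
vectors can shorten a basis vector. -/
def SRCVPReduced {n : ℕ} (B : Fin n → Euc n) : Prop :=
  ∀ i : Fin n, ∀ s ∈ subLattice B i, ‖B i‖ ≤ ‖B i - s‖

/-! For each `i` let `h_i` be the distance from `b_i` to `W_i = span {b_j : j ≠ i}`. Rounding
coefficients one at a time (Babai) puts every point of `W_i` within squared distance
`¼ ∑_{j ≠ i} ‖b_j‖²` of `Λ(B_{[n]∖i})`, so SR-CVP reducedness gives
`‖b_i‖² ≤ h_i² + ¼ ∑_{j ≠ i} ‖b_j‖²`, while every lattice vector with nonzero `b_i`-coordinate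
has length at least `h_i`. Given `n` linearly independent lattice vectors `v_j`, a nonzero term
in the Leibniz expansion of the determinant of their coefficient matrix pairs each `b_i` with a
distinct `v_{σ i}` of nonzero `b_i`-coordinate; summing over `i` gives
`(5 - n) ∑ ‖b_i‖² ≤ 4 ∑ ‖v_j‖² ≤ 4n r²` whenever all `‖v_j‖ ≤ r`. -/

section Orthogonal

open Submodule

variable {E : Type*} [NormedAddCommGroup E] [InnerProductSpace ℝ E]

lemma norm_add_sq_of_mem_orthogonal {K : Submodule ℝ E} {v w : E} (hv : v ∈ Kᗮ) (hw : w ∈ K) :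
    ‖v + w‖ ^ 2 = ‖v‖ ^ 2 + ‖w‖ ^ 2 := by
  simp only [sq]
  exact norm_add_sq_eq_norm_sq_add_norm_sq_real (inner_left_of_mem_orthogonal hw hv)

lemma exists_int_norm_sub_sum_sq_le {ι : Type*} (u : ι → E) (s : Finset ι) {t : E}
    (ht : t ∈ span ℝ (u '' s)) :
    ∃ z : ι → ℤ, ‖t - ∑ j ∈ s, (z j : ℝ) • u j‖ ^ 2 ≤ 1 / 4 * ∑ j ∈ s, ‖u j‖ ^ 2 := by
  classical
  induction s using Finset.induction_on generalizing t with
  | empty => exact ⟨0, by simp_all⟩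
  | insert a s has ih =>
    set W := span ℝ (u '' s)
    have : FiniteDimensional ℝ W := FiniteDimensional.span_of_finite ℝ (s.finite_toSet.image u)
    rw [Finset.coe_insert, Set.image_insert_eq, mem_span_insert] at ht
    obtain ⟨x, w, hw, rfl⟩ := ht
    set k : ℤ := round x
    have hW : (x - k) • W.starProjection (u a) + w ∈ W :=
      add_mem (smul_mem _ _ (starProjection_apply_mem _ _)) hw
    -- Round the coefficient of `u a`; the rounding error lies in `Wᗮ`, the rest is handled in `W`.
    obtain ⟨z, hz⟩ := ih hW
    refine ⟨Function.update z a k, ?_⟩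
    have hsplit : x • u a + w - ∑ j ∈ insert a s, (Function.update z a k j : ℝ) • u j =
        (x - k) • Wᗮ.starProjection (u a) +
          ((x - k) • W.starProjection (u a) + w - ∑ j ∈ s, (z j : ℝ) • u j) := by
      have hs : ∑ j ∈ s, (Function.update z a k j : ℝ) • u j = ∑ j ∈ s, (z j : ℝ) • u j :=
        Finset.sum_congr rfl fun j hj => by rw [Function.update_of_ne (ne_of_mem_of_not_mem hj has)]
      rw [Finset.sum_insert has, hs, Function.update_self, starProjection_orthogonal_val]
      module
    have hround : (x - k) ^ 2 ≤ 1 / 4 := by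
      have := abs_sub_round x
      rw [← sq_abs]; nlinarith [abs_nonneg (x - k)]
    have hq : ‖Wᗮ.starProjection (u a)‖ ^ 2 ≤ ‖u a‖ ^ 2 :=
      pow_le_pow_left₀ (norm_nonneg _) (norm_starProjection_apply_le _ _) 2
    rw [hsplit, norm_add_sq_of_mem_orthogonal (smul_mem _ _ (starProjection_apply_mem _ _))
      (sub_mem hW (sum_mem fun j hj => smul_mem _ _ (subset_span ⟨j, hj, rfl⟩))),
      norm_smul, mul_pow, Real.norm_eq_abs, sq_abs, Finset.sum_insert has]
    nlinarith [sq_nonneg (x - k), sq_nonneg ‖Wᗮ.starProjection (u a)‖]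

lemma norm_sq_le_of_forall_norm_le_norm_sub_sum [FiniteDimensional ℝ E] {ι : Type*} (u : ι → E)
    (s : Finset ι) {b : E} (hb : ∀ z : ι → ℤ, ‖b‖ ≤ ‖b - ∑ j ∈ s, (z j : ℝ) • u j‖) :
    ‖b‖ ^ 2 ≤ ‖(span ℝ (u '' s))ᗮ.starProjection b‖ ^ 2 + 1 / 4 * ∑ j ∈ s, ‖u j‖ ^ 2 := by
  classical
  set W := span ℝ (u '' s)
  obtain ⟨z, hz⟩ := exists_int_norm_sub_sum_sq_le u s (starProjection_apply_mem W b)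
  have hsplit : b - ∑ j ∈ s, (z j : ℝ) • u j =
      Wᗮ.starProjection b + (W.starProjection b - ∑ j ∈ s, (z j : ℝ) • u j) := by
    rw [starProjection_orthogonal_val]; abel
  calc ‖b‖ ^ 2 ≤ ‖b - ∑ j ∈ s, (z j : ℝ) • u j‖ ^ 2 :=
        pow_le_pow_left₀ (norm_nonneg _) (hb z) 2
    _ = ‖Wᗮ.starProjection b‖ ^ 2 + ‖W.starProjection b - ∑ j ∈ s, (z j : ℝ) • u j‖ ^ 2 := by
      rw [hsplit, norm_add_sq_of_mem_orthogonal (K := W) (starProjection_apply_mem _ _)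
        (sub_mem (starProjection_apply_mem _ _)
          (sum_mem fun j hj => smul_mem _ _ (subset_span ⟨j, hj, rfl⟩)))]
    _ ≤ _ := by gcongr

lemma norm_starProjection_orthogonal_le_norm_zsmul_add (K : Submodule ℝ E)
    [K.HasOrthogonalProjection] (b : E) {c : ℤ} (hc : c ≠ 0) {w : E} (hw : w ∈ K) :
    ‖Kᗮ.starProjection b‖ ≤ ‖(c : ℝ) • b + w‖ := by
  have hproj : Kᗮ.starProjection ((c : ℝ) • b + w) = (c : ℝ) • Kᗮ.starProjection b := by
    rw [map_add, map_smul, starProjection_orthogonal_apply_eq_zero hw, add_zero]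
  have hc1 : (1 : ℝ) ≤ |(c : ℝ)| := by exact_mod_cast Int.one_le_abs hc
  calc ‖Kᗮ.starProjection b‖ ≤ |(c : ℝ)| * ‖Kᗮ.starProjection b‖ :=
        le_mul_of_one_le_left (norm_nonneg _) hc1
    _ = ‖Kᗮ.starProjection ((c : ℝ) • b + w)‖ := by rw [hproj, norm_smul, Real.norm_eq_abs]
    _ ≤ ‖(c : ℝ) • b + w‖ := norm_starProjection_apply_le _ _

end Orthogonal

lemma Matrix.exists_perm_forall_ne_zero_of_det_ne_zero {m R : Type*} [Fintype m] [DecidableEq m]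
    [CommRing R] {M : Matrix m m R} (hM : M.det ≠ 0) :
    ∃ σ : Equiv.Perm m, ∀ i, M (σ i) i ≠ 0 := by
  contrapose! hM
  rw [Matrix.det_apply]
  refine Finset.sum_eq_zero fun σ _ => ?_
  obtain ⟨i, hi⟩ := hM σ
  exact smul_eq_zero_of_right _ (Finset.prod_eq_zero (mem_univ i) hi)

lemma Matrix.det_ne_zero_of_linearIndependent_sum_smul {m E : Type*} [Fintype m] [DecidableEq m]
    [AddCommGroup E] [Module ℝ E] {b v : m → E} (M : Matrix m m ℝ)
    (hv : ∀ j, v j = ∑ i, M j i • b i) (hli : LinearIndependent ℝ v) : M.det ≠ 0 := by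
  have hrows : LinearIndependent ℝ M.row := by
    refine LinearIndependent.of_comp (Fintype.linearCombination ℝ b) ?_
    convert hli using 1
    funext j
    rw [Function.comp_apply, Fintype.linearCombination_apply, hv]
    rfl
  exact (Matrix.isUnit_iff_isUnit_det M).mp (Matrix.linearIndependent_rows_iff_isUnit.mp hrows)
    |>.ne_zero

lemma sum_erase_mem_subLattice {n : ℕ} (B : Fin n → Euc n) (i : Fin n) (z : Fin n → ℤ) :
    ∑ j ∈ univ.erase i, (z j : ℝ) • B j ∈ subLattice B i := by
  refine ⟨Function.update z i 0, by simp, ?_⟩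
  rw [← Finset.add_sum_erase _ _ (mem_univ i), Function.update_self, Int.cast_zero, zero_smul,
    zero_add]
  exact Finset.sum_congr rfl fun j hj => by rw [Function.update_of_ne (ne_of_mem_erase hj)]

lemma mem_lattice_self {n : ℕ} (B : Fin n → Euc n) (i : Fin n) : B i ∈ lattice B :=
  ⟨Pi.single i 1, by simp [Pi.single_apply]⟩

lemma SRCVPReduced.norm_sq_le {n : ℕ} {B : Fin n → Euc n} (hred : SRCVPReduced B) (i : Fin n)
    {c : Fin n → ℤ} (hc : c i ≠ 0) :
    ‖B i‖ ^ 2 ≤ ‖∑ j, (c j : ℝ) • B j‖ ^ 2 + 1 / 4 * ∑ j ∈ univ.erase i, ‖B j‖ ^ 2 := by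
  set W := Submodule.span ℝ (B '' ↑(univ.erase i))
  have hcvp := norm_sq_le_of_forall_norm_le_norm_sub_sum B (univ.erase i)
    fun z => hred i _ (sum_erase_mem_subLattice B i z)
  have hheight : ‖Wᗮ.starProjection (B i)‖ ≤ ‖∑ j, (c j : ℝ) • B j‖ := by
    rw [← Finset.add_sum_erase _ _ (mem_univ i)]
    exact norm_starProjection_orthogonal_le_norm_zsmul_add W _ hc
      (Submodule.sum_mem _ fun j hj => Submodule.smul_mem _ _ (Submodule.subset_span ⟨j, hj, rfl⟩))
  nlinarith [norm_nonneg (Wᗮ.starProjection (B i))]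

lemma SRCVPReduced.sum_sq_le {n : ℕ} {B : Fin n → Euc n} (hred : SRCVPReduced B)
    {v : Fin n → Euc n} (hv : ∀ j, v j ∈ lattice B) (hli : LinearIndependent ℝ v) :
    (5 - n) * ∑ i, ‖B i‖ ^ 2 ≤ 4 * ∑ j, ‖v j‖ ^ 2 := by
  choose C hC using hv
  obtain ⟨σ, hσ⟩ := Matrix.exists_perm_forall_ne_zero_of_det_ne_zero
    (Matrix.det_ne_zero_of_linearIndependent_sum_smul (Matrix.of fun j i => (C j i : ℝ)) hC hli)
  have hrow (i : Fin n) : ‖B i‖ ^ 2 ≤ ‖v (σ i)‖ ^ 2 + 1 / 4 * (∑ j, ‖B j‖ ^ 2 - ‖B i‖ ^ 2) := by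
    rw [hC, ← Finset.sum_erase_eq_sub (mem_univ i)]
    exact hred.norm_sq_le i (by simpa using hσ i)
  have hsum := Finset.sum_le_sum fun i (_ : i ∈ univ) => hrow i
  rw [Finset.sum_add_distrib, Equiv.sum_comp σ fun j => ‖v j‖ ^ 2, ← Finset.mul_sum,
    Finset.sum_sub_distrib, Finset.sum_const, card_univ, Fintype.card_fin, nsmul_eq_mul] at hsum
  linarith

lemma sq_le_succMin_sq {n k : ℕ} {B : Fin n → Euc n} (hk : 0 < k)
    (hne : ∃ v : Fin k → Euc n, (∀ j, v j ∈ lattice B) ∧ LinearIndependent ℝ v) {a : ℝ}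
    (ha : ∀ v : Fin k → Euc n, (∀ j, v j ∈ lattice B) → LinearIndependent ℝ v →
      a ≤ ∑ j, ‖v j‖ ^ 2) :
    a ≤ k * succMin B k ^ 2 := by
  have hbound : ∀ r ∈ {r : ℝ | ∃ v : Fin k → Euc n, (∀ j, v j ∈ lattice B) ∧
      LinearIndependent ℝ v ∧ ∀ j, ‖v j‖ ≤ r}, √(a / k) ≤ r := by
    rintro r ⟨v, hv, hli, hvr⟩
    have hr : 0 ≤ r := (norm_nonneg _).trans (hvr ⟨0, hk⟩)
    have hsum : ∑ j, ‖v j‖ ^ 2 ≤ k * r ^ 2 := by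
      simpa using Finset.sum_le_sum fun j (_ : j ∈ univ) =>
        pow_le_pow_left₀ (norm_nonneg _) (hvr j) 2
    rw [Real.sqrt_le_left hr, div_le_iff₀' (by positivity)]
    exact (ha v hv hli).trans hsum
  obtain ⟨v, hv, hli⟩ := hne
  have hmin : √(a / k) ≤ succMin B k := le_csInf
    ⟨_, v, hv, hli, fun j => single_le_sum (fun j _ => norm_nonneg (v j)) (mem_univ j)⟩ hbound
  rw [← div_le_iff₀' (by positivity)]
  exact (Real.sqrt_le_iff.mp hmin).2

theorem srcvp_sum_sq_bound_general {n : ℕ} (hn4 : n ≤ 4)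
    (B : Fin n → Euc n) (hB : LinearIndependent ℝ B)
    (hred : SRCVPReduced B) :
    ∑ i, ‖B i‖ ^ 2 ≤ 4 * n / ((5 : ℝ) - n) * succMin B n ^ 2 := by
  rcases n.eq_zero_or_pos with rfl | hn
  · simp
  have h5 : (0 : ℝ) < 5 - n := by
    have : (n : ℝ) ≤ 4 := by exact_mod_cast hn4
    linarith
  have hmin := sq_le_succMin_sq hn ⟨B, mem_lattice_self B, hB⟩ (a := (5 - n) * (∑ i, ‖B i‖ ^ 2) / 4)
    fun v hv hli => by linarith [hred.sum_sq_le hv hli]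
  rw [div_mul_eq_mul_div, le_div_iff₀ h5]
  linarith

theorem srcvp_sum_sq_bound {n : ℕ} (hn : 1 ≤ n) (hn4 : n ≤ 4)
    (B : Fin n → Euc n) (hB : LinearIndependent ℝ B)
    (hred : SRCVPReduced B) :
    ∑ i, ‖B i‖ ^ 2 ≤ 4 * n / ((5 : ℝ) - n) * succMin B n ^ 2 :=
  srcvp_sum_sq_bound_general hn4 B hB hred
end
end

section
/- Let ε ≥ 1 and let B = [b_1,…,b_n] be a basis of a full-rank lattice Λ(B) in ℝ^n such that for every i there exists s_i ∈ Λ(B_{[n]∖i}) with ‖π_{B_{[n]∖i}}(b_i) − s_i‖² ≤ ε · ρ(B_{[n]∖i})² (an ε-approximate CVP solution within span(B_{[n]∖i})) and ‖b_i‖ ≤ ‖b_i − s_i‖. If n < 4/ε + 1, then l(B) := max_i ‖b_i‖ ≤ √(4n/(4 − εn + ε)) · λ_n(B). -/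
open Finset

noncomputable section

/-- The covering radius of the sublattice `Λ(B_{[n]∖i})` within its span. -/
def covRadSub {n : ℕ} (B : Fin n → Euc n) (i : Fin n) : ℝ :=
  sSup ((fun x => Metric.infDist x (subLattice B i)) ''
    ↑(Submodule.span ℝ (B '' {j | j ≠ i})))

/-!
Babai's nearest-plane rounding bounds the covering radius: `ρ(B_{[n]∖i})² ≤ ¼ ∑_{j ≠ i} ‖b_j‖²`.
Among any `n` independent lattice vectors one leaves the hyperplane `span(B_{[n]∖i})`; its
component orthogonal to that hyperplane is a nonzero integer multiple of that of `b_i`, so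
`dist(b_i, span(B_{[n]∖i})) ≤ λ_n`. Since `s_i` lies in the hyperplane, Pythagoras and
`‖b_i‖ ≤ ‖b_i - s_i‖` give `‖b_i‖² ≤ λ_n² + (ε/4) ∑_{j ≠ i} ‖b_j‖²`, and evaluating this at the
longest basis vector yields `l(B)² ≤ 4 λ_n² / (4 - ε(n - 1))`.
-/

section
variable {E : Type*} [NormedAddCommGroup E] [InnerProductSpace ℝ E]

theorem Submodule.norm_sub_sq_eq_add_of_mem (K : Submodule ℝ E) [K.HasOrthogonalProjection]
    (b : E) {s : E} (hs : s ∈ K) :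
    ‖b - s‖ ^ 2 = ‖b - K.starProjection b‖ ^ 2 + ‖K.starProjection b - s‖ ^ 2 := by
  have horth : inner ℝ (b - K.starProjection b) (K.starProjection b - s) = 0 :=
    K.starProjection_inner_eq_zero b _ (K.sub_mem (K.starProjection_apply_mem b) hs)
  have h := norm_add_sq_real (b - K.starProjection b) (K.starProjection b - s)
  rw [horth, sub_add_sub_cancel] at h
  linarith

theorem Submodule.norm_sub_starProjection_le (K : Submodule ℝ E) [K.HasOrthogonalProjection]
    (b : E) : ‖b - K.starProjection b‖ ≤ ‖b‖ := by
  simpa using Kᗮ.norm_starProjection_apply_le b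

theorem Submodule.norm_smul_sub_starProjection_add_sq_le (K : Submodule ℝ E)
    [K.HasOrthogonalProjection] (b : E) (r : ℝ) {y : E} (hy : y ∈ K) :
    ‖r • (b - K.starProjection b) + y‖ ^ 2 ≤ r ^ 2 * ‖b‖ ^ 2 + ‖y‖ ^ 2 := by
  rw [norm_add_sq_real, real_inner_smul_left, K.starProjection_inner_eq_zero _ _ hy, mul_zero,
    mul_zero, add_zero, norm_smul, mul_pow, Real.norm_eq_abs, sq_abs]
  gcongr
  exact K.norm_sub_starProjection_le b

theorem exists_int_norm_sub_sum_sq_le_of_mem_span [FiniteDimensional ℝ E]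
    {ι : Type*} [Fintype ι] [DecidableEq ι] (b : ι → E) (s : Finset ι) {x : E}
    (hx : x ∈ Submodule.span ℝ (b '' s)) :
    ∃ c : ι → ℤ, (∀ j ∉ s, c j = 0) ∧
      ‖x - ∑ j, (c j : ℝ) • b j‖ ^ 2 ≤ (∑ j ∈ s, ‖b j‖ ^ 2) / 4 := by
  induction s using Finset.induction_on generalizing x with
  | empty =>
    simp only [coe_empty, Set.image_empty, Submodule.span_empty, Submodule.mem_bot] at hx
    exact ⟨0, fun _ _ => rfl, by simp [hx]⟩
  | @insert a s ha ih =>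
    rw [coe_insert, Set.image_insert_eq, Submodule.span_insert] at hx
    obtain ⟨y, hy, z, hz, rfl⟩ := Submodule.mem_sup.mp hx
    obtain ⟨t, rfl⟩ := Submodule.mem_span_singleton.mp hy
    set W := Submodule.span ℝ (b '' s)
    set r := t - round t
    -- Round the coefficient of `b a`; the part of `x` left off `W` is then
    -- `r • (b a - W.starProjection (b a))`, of squared norm at most `‖b a‖² / 4`.
    have hw : r • W.starProjection (b a) + z ∈ W :=
      W.add_mem (W.smul_mem _ (W.starProjection_apply_mem _)) hz
    obtain ⟨c, hcs, hc⟩ := ih hw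
    refine ⟨c + Pi.single a (round t), fun j hj => ?_, ?_⟩
    · rw [mem_insert, not_or] at hj
      simp [hcs j hj.2, hj.1]
    have hsum : ∑ j, ((c + Pi.single a (round t) : ι → ℤ) j : ℝ) • b j
        = ∑ j, (c j : ℝ) • b j + (round t : ℝ) • b a := by
      simp [add_smul, sum_add_distrib, Pi.single_apply, ite_smul]
    have hcW : ∑ j, (c j : ℝ) • b j ∈ W := by
      refine Submodule.sum_mem _ fun j _ => ?_
      by_cases hj : j ∈ s
      · exact W.smul_mem _ (Submodule.subset_span ⟨j, hj, rfl⟩)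
      · simp [hcs j hj]
    have hsplit : t • b a + z - ∑ j, ((c + Pi.single a (round t) : ι → ℤ) j : ℝ) • b j
        = r • (b a - W.starProjection (b a))
          + (r • W.starProjection (b a) + z - ∑ j, (c j : ℝ) • b j) := by
      rw [hsum]; simp only [r]; module
    have hr : r ^ 2 ≤ 1 / 4 := by
      nlinarith [abs_sub_round t, abs_nonneg r, sq_abs r]
    have := W.norm_smul_sub_starProjection_add_sq_le (b a) r (W.sub_mem hw hcW)
    rw [hsplit, sum_insert ha]
    nlinarith [sq_nonneg ‖b a‖]
end

theorem le_div_of_forall_le_add_mul_sum_erase {ι : Type*} [Fintype ι] [DecidableEq ι]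
    {a : ι → ℝ} {L κ : ℝ} (hκ : 0 ≤ κ) (hcard : κ * (Fintype.card ι - 1) < 1)
    (h : ∀ i, a i ≤ L + κ * ∑ j ∈ univ.erase i, a j) (i : ι) :
    a i ≤ L / (1 - κ * (Fintype.card ι - 1)) := by
  obtain ⟨m, -, hm⟩ := exists_max_image univ a ⟨i, mem_univ i⟩
  have hsum : ∑ j ∈ univ.erase m, a j ≤ (Fintype.card ι - 1) * a m := by
    have := sum_le_card_nsmul (univ.erase m) a (a m) fun j _ => hm j (mem_univ j)
    rwa [card_erase_of_mem (mem_univ m), nsmul_eq_mul, card_univ,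
      Nat.cast_pred (Fintype.card_pos_iff.mpr ⟨i⟩)] at this
  rw [le_div_iff₀ (by linarith)]
  nlinarith [h m, hm i (mem_univ i), mul_le_mul_of_nonneg_left hsum hκ]

theorem subLattice_subset_span {n : ℕ} (B : Fin n → Euc n) (i : Fin n) :
    subLattice B i ⊆ Submodule.span ℝ (B '' {j | j ≠ i}) := by
  rintro _ ⟨c, hci, rfl⟩
  refine Submodule.sum_mem _ fun j _ => ?_
  by_cases hj : j = i
  · simp [hj, hci]
  · exact Submodule.smul_mem _ _ (Submodule.subset_span ⟨j, hj, rfl⟩)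

theorem covRadSub_nonneg {n : ℕ} (B : Fin n → Euc n) (i : Fin n) : 0 ≤ covRadSub B i :=
  Real.sSup_nonneg <| by
    rintro _ ⟨x, -, rfl⟩
    exact Metric.infDist_nonneg

theorem covRadSub_sq_le {n : ℕ} (B : Fin n → Euc n) (i : Fin n) :
    covRadSub B i ^ 2 ≤ (∑ j ∈ univ.erase i, ‖B j‖ ^ 2) / 4 := by
  refine (pow_le_pow_left₀ (covRadSub_nonneg B i) ?_ 2).trans
    (Real.sq_sqrt (by positivity)).le
  refine Real.sSup_le ?_ (Real.sqrt_nonneg _)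
  rintro _ ⟨x, hx, rfl⟩
  have hx' : x ∈ Submodule.span ℝ (B '' ↑(univ.erase i)) := by
    rwa [show ((univ.erase i : Finset (Fin n)) : Set (Fin n)) = {j | j ≠ i} by ext; simp]
  obtain ⟨c, hc0, hc⟩ := exists_int_norm_sub_sum_sq_le_of_mem_span B _ hx'
  calc Metric.infDist x (subLattice B i)
      ≤ ‖x - ∑ j, (c j : ℝ) • B j‖ := by
        rw [← dist_eq_norm]
        exact Metric.infDist_le_dist_of_mem ⟨c, hc0 i (notMem_erase i univ), rfl⟩
    _ ≤ _ := Real.le_sqrt_of_sq_le hc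

theorem norm_sub_starProjection_le_of_mem_lattice {n : ℕ} (B : Fin n → Euc n) (i : Fin n)
    {v : Euc n} (hv : v ∈ lattice B) (hvW : v ∉ Submodule.span ℝ (B '' {j | j ≠ i})) :
    ‖B i - (Submodule.span ℝ (B '' {j | j ≠ i})).starProjection (B i)‖ ≤ ‖v‖ := by
  set W := Submodule.span ℝ (B '' {j | j ≠ i})
  obtain ⟨c, rfl⟩ := hv
  have hci : c i ≠ 0 := fun h0 => hvW (subLattice_subset_span B i ⟨c, h0, rfl⟩)
  have hrest : ∑ j ∈ univ.erase i, (c j : ℝ) • B j ∈ W :=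
    Submodule.sum_mem _ fun j hj =>
      W.smul_mem _ (Submodule.subset_span ⟨j, ne_of_mem_erase hj, rfl⟩)
  have hres :
      Wᗮ.starProjection (∑ j, (c j : ℝ) • B j) = (c i : ℝ) • Wᗮ.starProjection (B i) := by
    rw [← add_sum_erase _ _ (mem_univ i), map_add, map_smul,
      Wᗮ.starProjection_apply_eq_zero_iff.mpr (W.le_orthogonal_orthogonal hrest), add_zero]
  calc ‖B i - W.starProjection (B i)‖
      ≤ |(c i : ℝ)| * ‖B i - W.starProjection (B i)‖ :=
        le_mul_of_one_le_left (norm_nonneg _) (by exact_mod_cast Int.one_le_abs hci)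
    _ = ‖Wᗮ.starProjection (∑ j, (c j : ℝ) • B j)‖ := by
        rw [hres, norm_smul, Real.norm_eq_abs, W.starProjection_orthogonal_val]
    _ ≤ _ := Wᗮ.norm_starProjection_apply_le _

theorem norm_sub_starProjection_le_succMin {n : ℕ} (B : Fin n → Euc n)
    (hB : LinearIndependent ℝ B) (i : Fin n) :
    ‖B i - (Submodule.span ℝ (B '' {j | j ≠ i})).starProjection (B i)‖ ≤ succMin B n := by
  refine le_csInf ⟨∑ j, ‖B j‖, B, fun j => ⟨Pi.single j 1, by simp [Pi.single_apply]⟩, hB,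
    fun j => single_le_sum (fun k _ => norm_nonneg (B k)) (mem_univ j)⟩ ?_
  rintro r ⟨v, hlat, hli, hnorm⟩
  -- `n` independent vectors span `ℝ^n`, so they cannot all lie in the hyperplane.
  obtain ⟨k, hk⟩ : ∃ k, v k ∉ Submodule.span ℝ (B '' {j | j ≠ i}) := by
    by_contra! h
    have : Nonempty (Fin n) := ⟨i⟩
    have htop := hli.span_eq_top_of_card_eq_finrank (by simp)
    refine hB.notMem_span_image (s := {j | j ≠ i}) (not_not_intro rfl) ?_
    exact Submodule.span_le.mpr (Set.range_subset_iff.mpr h) (htop ▸ Submodule.mem_top)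
  exact (norm_sub_starProjection_le_of_mem_lattice B i (hlat k) hk).trans (hnorm k)

theorem norm_sq_le_of_approxCVP {n : ℕ} (B : Fin n → Euc n) (hB : LinearIndependent ℝ B)
    {ε : ℝ} (hε : 0 ≤ ε) (i : Fin n) {s : Euc n} (hs : s ∈ subLattice B i)
    (hcvp : ‖(Submodule.span ℝ (B '' {j | j ≠ i})).starProjection (B i) - s‖ ^ 2 ≤
      ε * covRadSub B i ^ 2)
    (hshort : ‖B i‖ ≤ ‖B i - s‖) :
    ‖B i‖ ^ 2 ≤ succMin B n ^ 2 + ε / 4 * ∑ j ∈ univ.erase i, ‖B j‖ ^ 2 :=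
  calc ‖B i‖ ^ 2 ≤ ‖B i - s‖ ^ 2 := pow_le_pow_left₀ (norm_nonneg _) hshort 2
    _ = ‖B i - (Submodule.span ℝ (B '' {j | j ≠ i})).starProjection (B i)‖ ^ 2 +
        ‖(Submodule.span ℝ (B '' {j | j ≠ i})).starProjection (B i) - s‖ ^ 2 :=
      Submodule.norm_sub_sq_eq_add_of_mem _ _ (subLattice_subset_span B i hs)
    _ ≤ succMin B n ^ 2 + ε * ((∑ j ∈ univ.erase i, ‖B j‖ ^ 2) / 4) :=
      add_le_add (pow_le_pow_left₀ (norm_nonneg _) (norm_sub_starProjection_le_succMin B hB i) 2)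
        (hcvp.trans (mul_le_mul_of_nonneg_left (covRadSub_sq_le B i) hε))
    _ = _ := by ring

theorem sr_epsCVP_basis_length_bound_general {n : ℕ} (ε : ℝ)
    (B : Fin n → Euc n) (hB : LinearIndependent ℝ B)
    (hred : ∀ i : Fin n, ∃ s ∈ subLattice B i,
      ‖(Submodule.orthogonalProjectionOnto (Submodule.span ℝ (B '' {j | j ≠ i})) (B i) : Euc n) - s‖ ^ 2 ≤
          ε * covRadSub B i ^ 2 ∧
        ‖B i‖ ≤ ‖B i - s‖)
    (hn : (n : ℝ) < 4 / ε + 1) :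
    ∀ i : Fin n, ‖B i‖ ≤ Real.sqrt (4 * n / (4 - ε * n + ε)) * succMin B n := by
  intro i
  have hn1 : (1 : ℝ) ≤ n := by exact_mod_cast i.pos
  have hε : 0 < ε := (div_pos_iff_of_pos_left four_pos).mp (by linarith)
  have hδ : 0 < 4 - ε * n + ε := by
    nlinarith [(lt_div_iff₀ hε).mp (show (n : ℝ) - 1 < 4 / ε by linarith)]
  have hmin : 0 ≤ succMin B n := (norm_nonneg _).trans (norm_sub_starProjection_le_succMin B hB i)
  have hκ : ε / 4 * (n - 1) < 1 := by linarith
  have hcoord :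
      ∀ j, ‖B j‖ ^ 2 ≤ succMin B n ^ 2 + ε / 4 * ∑ l ∈ univ.erase j, ‖B l‖ ^ 2 := by
    intro j
    obtain ⟨s, hs, hcvp, hshort⟩ := hred j
    exact norm_sq_le_of_approxCVP B hB hε.le j hs hcvp hshort
  have hsq := le_div_of_forall_le_add_mul_sum_erase (a := fun j => ‖B j‖ ^ 2)
    (div_nonneg hε.le zero_le_four) (by rwa [Fintype.card_fin]) hcoord i
  rw [Fintype.card_fin] at hsq
  have hconst : succMin B n ^ 2 / (1 - ε / 4 * (n - 1)) ≤
      4 * n / (4 - ε * n + ε) * succMin B n ^ 2 :=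
    calc succMin B n ^ 2 / (1 - ε / 4 * (n - 1))
        = 4 * 1 / (4 - ε * n + ε) * succMin B n ^ 2 := by
          rw [show 1 - ε / 4 * (n - 1) = (4 - ε * n + ε) / 4 by ring]; field_simp
      _ ≤ 4 * n / (4 - ε * n + ε) * succMin B n ^ 2 := by gcongr
  rw [← Real.sqrt_sq hmin, ← Real.sqrt_mul (by positivity)]
  exact Real.le_sqrt_of_sq_le (hsq.trans hconst)

theorem sr_epsCVP_basis_length_bound {n : ℕ} (ε : ℝ) (hε : 1 ≤ ε)
    (B : Fin n → Euc n) (hB : LinearIndependent ℝ B)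
    (hred : ∀ i : Fin n, ∃ s ∈ subLattice B i,
      ‖(Submodule.orthogonalProjectionOnto (Submodule.span ℝ (B '' {j | j ≠ i})) (B i) : Euc n) - s‖ ^ 2 ≤
          ε * covRadSub B i ^ 2 ∧
        ‖B i‖ ≤ ‖B i - s‖)
    (hn : (n : ℝ) < 4 / ε + 1) :
    ∀ i : Fin n, ‖B i‖ ≤ Real.sqrt (4 * n / (4 - ε * n + ε)) * succMin B n :=
  sr_epsCVP_basis_length_bound_general ε B hB hred hn
end
end

section
/- Let B = [b_1,…,b_n] be an SR-CVP reduced basis of a full-rank lattice Λ(B) in ℝ^n, and suppose v = Σ_{i=1}^n c_i b_i (c_i ∈ ℤ) is a shortest nonzero vector of Λ(B), i.e., ‖v‖ = λ_1(B), with c_k = ±1 for some index k. Then ‖b_k‖ = λ_1(B); i.e., the reduced basis itself contains a vector achieving the first successive minimum. -/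
open Finset

noncomputable section

/-! The SR-CVP condition for `b_k` applied to `s = b_k ∓ v ∈ Λ(B_{[n]∖k})` gives
`‖b_k‖ ≤ ‖v‖ = λ_1`, while `b_k` is a nonzero lattice vector, so `λ_1 ≤ ‖b_k‖`. -/

section

variable {n : ℕ} {B : Fin n → Euc n}

lemma self_mem_lattice (B : Fin n → Euc n) (i : Fin n) : B i ∈ lattice B :=
  ⟨Pi.single i 1, by simp [apply_ite (fun z : ℤ => (z : ℝ)), Pi.single_apply]⟩

lemma succMin_one_le_norm {w : Euc n} (hw : w ∈ lattice B) (hw0 : w ≠ 0) :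
    succMin B 1 ≤ ‖w‖ := by
  refine csInf_le ⟨0, fun r ⟨u, _, _, hu⟩ => (norm_nonneg _).trans (hu 0)⟩ ?_
  exact ⟨fun _ => w, fun _ => hw, linearIndependent_unique_iff.mpr hw0, fun _ => le_rfl⟩

lemma SRCVPReduced.norm_le_of_coeff_eq_one (hred : SRCVPReduced B) {c : Fin n → ℤ} {k : Fin n}
    (hck : c k = 1) : ‖B k‖ ≤ ‖∑ i, (c i : ℝ) • B i‖ := by
  set v := ∑ i, (c i : ℝ) • B i
  have hs : B k - v ∈ subLattice B k := by
    refine ⟨Pi.single k 1 - c, by simp [hck], ?_⟩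
    simp only [Pi.sub_apply, Int.cast_sub, sub_smul, sum_sub_distrib, v]
    simp [apply_ite (fun z : ℤ => (z : ℝ)), Pi.single_apply]
  simpa using hred k _ hs

lemma SRCVPReduced.norm_le_of_coeff_eq_one_or_neg_one (hred : SRCVPReduced B)
    {c : Fin n → ℤ} {k : Fin n} (hck : c k = 1 ∨ c k = -1) :
    ‖B k‖ ≤ ‖∑ i, (c i : ℝ) • B i‖ := by
  rcases hck with hck | hck
  · exact hred.norm_le_of_coeff_eq_one hck
  · simpa [neg_smul, sum_neg_distrib] using
      hred.norm_le_of_coeff_eq_one (c := -c) (by simp [hck])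

end

theorem srcvp_contains_shortest_vector {n : ℕ}
    (B : Fin n → Euc n) (hB : LinearIndependent ℝ B) (hred : SRCVPReduced B)
    (c : Fin n → ℤ) (v : Euc n) (hv : v = ∑ i, (c i : ℝ) • B i)
    (hshort : ‖v‖ = succMin B 1) (k : Fin n) (hck : c k = 1 ∨ c k = -1) :
    ‖B k‖ = succMin B 1 := by
  refine le_antisymm ?_ (succMin_one_le_norm (self_mem_lattice B k) (hB.ne_zero k))
  calc ‖B k‖ ≤ ‖v‖ := hv ▸ hred.norm_le_of_coeff_eq_one_or_neg_one hck
    _ = succMin B 1 := hshort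

end
end
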